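/- Let γ be a gauge on ℝ^d, U ⊂ ℝ^d a non-trivial linear subspace, y ∉ U, x ∈ U, ε ≥ 0. The following are equivalent: (a) x is an ε-best approximation of y in U, i.e., γ(x−y) ≤ γ(z−y) + ε for all z ∈ U; (b) (x−y) ⊥_B^ε z for all z ∈ U; (c) there exists x* with γ°(x*) = 1, ⟨x*, u⟩ = 0 for all u ∈ U, and x* ∈ ∂_ε γ(x−y). Moreover the set of ε-best approximations of y in U is non-empty, closed, and convex. -/

import Mathlib

open scoped RealInnerProductSpace

noncomputable section

variable {d : ℕ}

/-- A gauge on ℝ^d: nonnegative, vanishing only at 0, positively homogeneous, subadditive. -/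
def IsGauge (γ : EuclideanSpace ℝ (Fin d) → ℝ) : Prop :=
  (∀ x, 0 ≤ γ x) ∧ (∀ x, γ x = 0 → x = 0) ∧
  (∀ (x : EuclideanSpace ℝ (Fin d)) (l : ℝ), 0 < l → γ (l • x) = l * γ x) ∧
  (∀ x y, γ (x + y) ≤ γ x + γ y)

/-- The polar function of a gauge. -/
def polarGauge (γ : EuclideanSpace ℝ (Fin d) → ℝ) : EuclideanSpace ℝ (Fin d) → ℝ :=
  fun xs => sInf {l : ℝ | 0 < l ∧ ∀ x, ⟪xs, x⟫ ≤ l * γ x}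

/-- The ε-subdifferential of f at x. -/
def epsSubdiff (f : EuclideanSpace ℝ (Fin d) → ℝ) (ε : ℝ) (x : EuclideanSpace ℝ (Fin d)) :
    Set (EuclideanSpace ℝ (Fin d)) :=
  {xs | ∀ y, ⟪xs, y - x⟫ ≤ f y - f x + ε}

/-- ε-Birkhoff orthogonality: x ⊥_B^ε y iff γ x ≤ γ (x + λ y) + ε for all λ. -/
def BirkhoffEps (γ : EuclideanSpace ℝ (Fin d) → ℝ) (ε : ℝ)
    (x y : EuclideanSpace ℝ (Fin d)) : Prop :=
  ∀ l : ℝ, γ x ≤ γ (x + l • y) + ε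

/-- The ε-directional derivative of f at x in direction y. -/
def epsDirDeriv (f : EuclideanSpace ℝ (Fin d) → ℝ) (ε : ℝ)
    (x y : EuclideanSpace ℝ (Fin d)) : ℝ :=
  sInf {q : ℝ | ∃ l : ℝ, 0 < l ∧ q = (f (x + l • y) - f x + ε) / l}

/-!
(a) ⇔ (b) is the substitution `z = x + λ w`. For (c), coercivity of `γ` gives a `γ`-nearest
point `z₀ ∈ U` to `y`. By Hahn–Banach, the functional on `U ⊕ ℝ y` that vanishes on `U` and
sends `y` to `-γ (z₀ - y)` extends to a linear minorant of `γ`; its Riesz representative `x*`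
attains `γ` at `z₀ - y`, so `γ° x* = 1`, and `x* ∈ ∂_ε γ (x - y)` says exactly that
`γ (x - y) ≤ γ (z₀ - y) + ε`.
-/

open Filter

def epsBestApprox (γ : EuclideanSpace ℝ (Fin d) → ℝ) (U : Submodule ℝ (EuclideanSpace ℝ (Fin d)))
    (y : EuclideanSpace ℝ (Fin d)) (ε : ℝ) : Set (EuclideanSpace ℝ (Fin d)) :=
  {p | p ∈ U ∧ ∀ z ∈ U, γ (p - y) ≤ γ (z - y) + ε}

section

variable {γ : EuclideanSpace ℝ (Fin d) → ℝ} {U : Submodule ℝ (EuclideanSpace ℝ (Fin d))}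
  {x y : EuclideanSpace ℝ (Fin d)} {ε : ℝ}

lemma forall_le_add_iff_forall_birkhoffEps (hx : x ∈ U) :
    (∀ z ∈ U, γ (x - y) ≤ γ (z - y) + ε) ↔ ∀ z ∈ U, BirkhoffEps γ ε (x - y) z := by
  refine ⟨fun h z hz l => ?_, fun h z hz => ?_⟩
  · simpa [sub_add_eq_add_sub] using h (x + l • z) (U.add_mem hx (U.smul_mem l hz))
  · simpa using h (z - x) (U.sub_mem hz hx) 1

lemma forall_le_add_of_mem_epsSubdiff {xs : EuclideanSpace ℝ (Fin d)} (hx : x ∈ U)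
    (horth : ∀ u ∈ U, ⟪xs, u⟫ = 0) (hsub : xs ∈ epsSubdiff γ ε (x - y)) :
    ∀ z ∈ U, γ (x - y) ≤ γ (z - y) + ε := fun z hz => by
  have h := hsub (z - y)
  rw [sub_sub_sub_cancel_right, horth _ (U.sub_mem hz hx)] at h
  linarith

lemma polarGauge_eq_one {xs w : EuclideanSpace ℝ (Fin d)} (hle : ∀ v, ⟪xs, v⟫ ≤ γ v)
    (hw : ⟪xs, w⟫ = γ w) (hpos : 0 < γ w) : polarGauge γ xs = 1 :=
  IsLeast.csInf_eq ⟨⟨one_pos, by simpa using hle⟩, fun l ⟨_, hl⟩ => by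
    have := hl w
    rw [hw] at this
    exact le_of_mul_le_mul_right (by simpa using this) hpos⟩

end

namespace IsGauge

variable {γ : EuclideanSpace ℝ (Fin d) → ℝ}

lemma nonneg (hγ : IsGauge γ) (v : EuclideanSpace ℝ (Fin d)) : 0 ≤ γ v := hγ.1 v

lemma eq_zero (hγ : IsGauge γ) {v : EuclideanSpace ℝ (Fin d)} (hv : γ v = 0) : v = 0 := hγ.2.1 v hv

lemma smul_of_pos (hγ : IsGauge γ) {a : ℝ} (ha : 0 < a) (v : EuclideanSpace ℝ (Fin d)) :
    γ (a • v) = a * γ v := hγ.2.2.1 v a ha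

lemma add_le (hγ : IsGauge γ) (v w : EuclideanSpace ℝ (Fin d)) : γ (v + w) ≤ γ v + γ w :=
  hγ.2.2.2 v w

lemma map_zero (hγ : IsGauge γ) : γ 0 = 0 := by
  have h := hγ.smul_of_pos two_pos 0
  rw [smul_zero] at h
  linarith

lemma smul_of_nonneg (hγ : IsGauge γ) {a : ℝ} (ha : 0 ≤ a) (v : EuclideanSpace ℝ (Fin d)) :
    γ (a • v) = a * γ v := by
  rcases ha.eq_or_lt with rfl | ha
  · simp [hγ.map_zero]
  · exact hγ.smul_of_pos ha v

lemma pos (hγ : IsGauge γ) {v : EuclideanSpace ℝ (Fin d)} (hv : v ≠ 0) : 0 < γ v :=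
  (hγ.nonneg v).lt_of_ne fun h => hv (hγ.eq_zero h.symm)

lemma convexOn (hγ : IsGauge γ) : ConvexOn ℝ Set.univ γ := by
  refine ⟨convex_univ, fun p _ q _ a b ha hb _ => ?_⟩
  calc γ (a • p + b • q) ≤ γ (a • p) + γ (b • q) := hγ.add_le _ _
    _ = a • γ p + b • γ q := by
      rw [hγ.smul_of_nonneg ha, hγ.smul_of_nonneg hb, smul_eq_mul, smul_eq_mul]

lemma continuous (hγ : IsGauge γ) : Continuous γ :=
  continuousOn_univ.mp (hγ.convexOn.continuousOn isOpen_univ)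

lemma exists_pos_mul_norm_le (hγ : IsGauge γ) : ∃ m > 0, ∀ v, m * ‖v‖ ≤ γ v := by
  obtain ⟨m, hm, hmin⟩ := (isCompact_sphere (0 : EuclideanSpace ℝ (Fin d)) 1).exists_forall_le'
    hγ.continuous.continuousOn (a := 0) fun w hw => hγ.pos (ne_zero_of_mem_unit_sphere ⟨w, hw⟩)
  refine ⟨m, hm, fun v => ?_⟩
  rcases eq_or_ne v 0 with rfl | hv
  · simp [hγ.map_zero]
  have hv' : 0 < ‖v‖ := norm_pos_iff.mpr hv
  have hunit : ‖v‖⁻¹ • v ∈ Metric.sphere (0 : EuclideanSpace ℝ (Fin d)) 1 := by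
    simp [norm_smul, hv'.ne']
  calc m * ‖v‖ ≤ γ (‖v‖⁻¹ • v) * ‖v‖ := mul_le_mul_of_nonneg_right (hmin _ hunit) hv'.le
    _ = γ v := by rw [hγ.smul_of_pos (inv_pos.mpr hv')]; field_simp

lemma tendsto_sub_cocompact_atTop (hγ : IsGauge γ) (y : EuclideanSpace ℝ (Fin d)) :
    Tendsto (fun z => γ (z - y)) (cocompact _) atTop := by
  obtain ⟨m, hm, hle⟩ := hγ.exists_pos_mul_norm_le
  refine tendsto_atTop_mono (fun z => ?_)
    (tendsto_atTop_add_const_right _ (-(m * ‖y‖)) (tendsto_norm_cocompact_atTop.const_mul_atTop hm))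
  nlinarith [hle (z - y), norm_sub_norm_le z y]

lemma exists_isMinOn_sub (hγ : IsGauge γ) {s : Set (EuclideanSpace ℝ (Fin d))} (hs : IsClosed s)
    (hne : s.Nonempty) (y : EuclideanSpace ℝ (Fin d)) :
    ∃ z₀ ∈ s, IsMinOn (fun z => γ (z - y)) s z₀ := by
  obtain ⟨x₀, hx₀⟩ := hne
  exact (hγ.continuous.comp (continuous_sub_right y)).continuousOn.exists_isMinOn' hs hx₀
    (((hγ.tendsto_sub_cocompact_atTop y).eventually_ge_atTop _).filter_mono inf_le_left)

lemma exists_inner_le_of_le_sub (hγ : IsGauge γ) {U : Submodule ℝ (EuclideanSpace ℝ (Fin d))}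
    {y : EuclideanSpace ℝ (Fin d)} (hy : y ∉ U) {α : ℝ} (hα : 0 ≤ α)
    (hαU : ∀ u ∈ U, α ≤ γ (u - y)) :
    ∃ xs : EuclideanSpace ℝ (Fin d),
      (∀ v, ⟪xs, v⟫ ≤ γ v) ∧ (∀ u ∈ U, ⟪xs, u⟫ = 0) ∧ ⟪xs, y⟫ = -α := by
  let f₀ : EuclideanSpace ℝ (Fin d) →ₗ.[ℝ] ℝ := ⟨U, 0⟩
  let f := f₀.supSpanSingleton y (-α) hy
  have hfγ : ∀ p : f.domain, f p ≤ γ p := by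
    rintro ⟨p, hp⟩
    obtain ⟨u, hu, w, hw, rfl⟩ := Submodule.mem_sup.mp hp
    obtain ⟨c, rfl⟩ := Submodule.mem_span_singleton.mp hw
    rw [LinearPMap.supSpanSingleton_apply_mk f₀ y (-α) hy u hu c]
    change 0 + c * -α ≤ γ (u + c • y)
    rw [zero_add]
    rcases lt_or_ge c 0 with hc | hc
    · have hneg : 0 < -c := neg_pos.mpr hc
      calc c * -α = -c * α := by ring
        _ ≤ -c * γ ((-c)⁻¹ • u - y) := by
          gcongr; exact hαU _ (U.smul_mem _ hu)
        _ = γ (u + c • y) := by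
          rw [← hγ.smul_of_pos hneg, smul_sub, smul_smul, mul_inv_cancel₀ hneg.ne', one_smul,
            neg_smul, sub_neg_eq_add]
    · nlinarith [hγ.nonneg (u + c • y)]
  obtain ⟨g, hgf, hgγ⟩ := exists_extension_of_le_sublinear f γ
    (fun c hc v => hγ.smul_of_pos hc v) hγ.add_le hfγ
  refine ⟨(InnerProductSpace.toDual ℝ _).symm (LinearMap.toContinuousLinearMap g), ?_, ?_, ?_⟩
  · simpa using hgγ
  · intro u hu
    simpa [f₀] using (hgf ⟨u, Submodule.mem_sup_left hu⟩).trans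
      (LinearPMap.supSpanSingleton_apply_mk_of_mem f₀ (-α) hy hu)
  · simpa using (hgf ⟨y, _⟩).trans (LinearPMap.supSpanSingleton_apply_self f₀ (-α) hy)

lemma exists_polarGauge_eq_one_of_forall_le_add (hγ : IsGauge γ)
    {U : Submodule ℝ (EuclideanSpace ℝ (Fin d))} {x y : EuclideanSpace ℝ (Fin d)} (hy : y ∉ U)
    (hx : x ∈ U) {ε : ℝ} (hbest : ∀ z ∈ U, γ (x - y) ≤ γ (z - y) + ε) :
    ∃ xs : EuclideanSpace ℝ (Fin d), polarGauge γ xs = 1 ∧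
      (∀ u ∈ U, ⟪xs, u⟫ = 0) ∧ xs ∈ epsSubdiff γ ε (x - y) := by
  obtain ⟨z₀, hz₀, hmin⟩ := hγ.exists_isMinOn_sub U.closed_of_finiteDimensional ⟨0, U.zero_mem⟩ y
  obtain ⟨xs, hle, horth, hxsy⟩ :=
    hγ.exists_inner_le_of_le_sub hy (hγ.nonneg (z₀ - y)) fun u hu => hmin hu
  have hxs_sub : ∀ u ∈ U, ⟪xs, u - y⟫ = γ (z₀ - y) := fun u hu => by
    rw [inner_sub_right, horth u hu, hxsy, zero_sub, neg_neg]
  refine ⟨xs, polarGauge_eq_one hle (hxs_sub z₀ hz₀) ?_, horth, fun w => ?_⟩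
  · exact hγ.pos (sub_ne_zero.mpr (ne_of_mem_of_not_mem hz₀ hy))
  · rw [inner_sub_right, hxs_sub x hx]
    linarith [hle w, hbest z₀ hz₀]

lemma epsBestApprox_nonempty (hγ : IsGauge γ) (U : Submodule ℝ (EuclideanSpace ℝ (Fin d)))
    (y : EuclideanSpace ℝ (Fin d)) {ε : ℝ} (hε : 0 ≤ ε) : (epsBestApprox γ U y ε).Nonempty := by
  obtain ⟨z₀, hz₀, hmin⟩ := hγ.exists_isMinOn_sub U.closed_of_finiteDimensional ⟨0, U.zero_mem⟩ y
  exact ⟨z₀, hz₀, fun z hz => (hmin hz).trans (le_add_of_nonneg_right hε)⟩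

lemma isClosed_epsBestApprox (hγ : IsGauge γ) (U : Submodule ℝ (EuclideanSpace ℝ (Fin d)))
    (y : EuclideanSpace ℝ (Fin d)) (ε : ℝ) : IsClosed (epsBestApprox γ U y ε) := by
  simp only [epsBestApprox, Set.ofPred_and, Set.ofPred_forall]
  exact U.closed_of_finiteDimensional.inter (isClosed_iInter fun z => isClosed_iInter fun _ =>
    isClosed_le (hγ.continuous.comp (continuous_sub_right y)) continuous_const)

lemma convex_epsBestApprox (hγ : IsGauge γ) (U : Submodule ℝ (EuclideanSpace ℝ (Fin d)))
    (y : EuclideanSpace ℝ (Fin d)) (ε : ℝ) : Convex ℝ (epsBestApprox γ U y ε) := by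
  have hsub : ConvexOn ℝ Set.univ fun p => γ (p - y) := by
    simpa [Function.comp_def, neg_add_eq_sub] using hγ.convexOn.translate_right (-y)
  simp only [epsBestApprox, Set.ofPred_and, Set.ofPred_forall]
  exact U.convex.inter (convex_iInter fun z => convex_iInter fun _ => by
    simpa using hsub.convex_le (γ (z - y) + ε))

end IsGauge

theorem best_approximation_characterization_general (γ : EuclideanSpace ℝ (Fin d) → ℝ)
    (hγ : IsGauge γ) (U : Submodule ℝ (EuclideanSpace ℝ (Fin d)))
    (y : EuclideanSpace ℝ (Fin d)) (hy : y ∉ U)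
    (x : EuclideanSpace ℝ (Fin d)) (hx : x ∈ U) (ε : ℝ) (hε : 0 ≤ ε) :
    ((∀ z ∈ U, γ (x - y) ≤ γ (z - y) + ε) ↔ ∀ z ∈ U, BirkhoffEps γ ε (x - y) z) ∧
    ((∀ z ∈ U, γ (x - y) ≤ γ (z - y) + ε) ↔
      ∃ xs : EuclideanSpace ℝ (Fin d), polarGauge γ xs = 1 ∧
        (∀ u ∈ U, ⟪xs, u⟫ = 0) ∧ xs ∈ epsSubdiff γ ε (x - y)) ∧
    ({p : EuclideanSpace ℝ (Fin d) | p ∈ U ∧ ∀ z ∈ U, γ (p - y) ≤ γ (z - y) + ε}.Nonempty ∧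
     IsClosed {p : EuclideanSpace ℝ (Fin d) | p ∈ U ∧ ∀ z ∈ U, γ (p - y) ≤ γ (z - y) + ε} ∧
     Convex ℝ {p : EuclideanSpace ℝ (Fin d) | p ∈ U ∧ ∀ z ∈ U, γ (p - y) ≤ γ (z - y) + ε}) :=
  ⟨forall_le_add_iff_forall_birkhoffEps hx,
    ⟨hγ.exists_polarGauge_eq_one_of_forall_le_add hy hx,
      fun ⟨_, _, horth, hsub⟩ => forall_le_add_of_mem_epsSubdiff hx horth hsub⟩,
    hγ.epsBestApprox_nonempty U y hε, hγ.isClosed_epsBestApprox U y ε,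
    hγ.convex_epsBestApprox U y ε⟩

theorem best_approximation_characterization (γ : EuclideanSpace ℝ (Fin d) → ℝ)
    (hγ : IsGauge γ) (U : Submodule ℝ (EuclideanSpace ℝ (Fin d))) (hU : U ≠ ⊥)
    (y : EuclideanSpace ℝ (Fin d)) (hy : y ∉ U)
    (x : EuclideanSpace ℝ (Fin d)) (hx : x ∈ U) (ε : ℝ) (hε : 0 ≤ ε) :
    ((∀ z ∈ U, γ (x - y) ≤ γ (z - y) + ε) ↔ ∀ z ∈ U, BirkhoffEps γ ε (x - y) z) ∧
    ((∀ z ∈ U, γ (x - y) ≤ γ (z - y) + ε) ↔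
      ∃ xs : EuclideanSpace ℝ (Fin d), polarGauge γ xs = 1 ∧
        (∀ u ∈ U, ⟪xs, u⟫ = 0) ∧ xs ∈ epsSubdiff γ ε (x - y)) ∧
    ({p : EuclideanSpace ℝ (Fin d) | p ∈ U ∧ ∀ z ∈ U, γ (p - y) ≤ γ (z - y) + ε}.Nonempty ∧
     IsClosed {p : EuclideanSpace ℝ (Fin d) | p ∈ U ∧ ∀ z ∈ U, γ (p - y) ≤ γ (z - y) + ε} ∧
     Convex ℝ {p : EuclideanSpace ℝ (Fin d) | p ∈ U ∧ ∀ z ∈ U, γ (p - y) ≤ γ (z - y) + ε}) :=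
  best_approximation_characterization_general γ hγ U y hy x hx ε hε
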